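/- arXiv:2605.15356 — 6 statements merged into one kernel-verified Lean document; each statement's English description precedes it below -/
import Mathlib

section
/- Let (Ω, 𝒜, μ) be a σ-finite measure space, let p, q : Ω → [0,∞) be measurable with q(u) > 0 for μ-a.e. u with p(u) > 0, and suppose the likelihood-ratio control ∫ p(u)² / q(u) dμ(u) ≤ C holds for some finite C > 0. Then for any measurable functions g, ĝ : Ω → ℝ and any σ > 0, ∫ |Φ(-g(u)/σ) - Φ(-ĝ(u)/σ)| · p(u) dμ(u) ≤ (√C / (σ √(2π))) · ( ∫ (g(u) - ĝ(u))² q(u) dμ(u) )^{1/2}. -/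
open MeasureTheory Set

/-- The standard normal cumulative distribution function
`Φ(x) = (1/√(2π)) ∫_{-∞}^{x} e^{-t²/2} dt`. -/
noncomputable def stdNormalCDF (x : ℝ) : ℝ :=
  (Real.sqrt (2 * Real.pi))⁻¹ * ∫ t in Set.Iic x, Real.exp (-t ^ 2 / 2)

/-!
Φ is Lipschitz with constant `1/√(2π)`, the supremum of the Gaussian density, so the integrand is
at most `|g - gHat| p / (σ √(2π))`. Writing `|g - gHat| p = √((g - gHat)² q) · √(p² / q)` (valid
because `q > 0` wherever `p > 0`), Cauchy–Schwarz bounds its integral by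
`√(∫ (g - gHat)² q) · √(∫ p² / q) ≤ √(∫ (g - gHat)² q) · √C`.
-/

lemma abs_stdNormalCDF_sub_le (a b : ℝ) :
    |stdNormalCDF a - stdNormalCDF b| ≤ |a - b| / Real.sqrt (2 * Real.pi) := by
  have hint : Integrable (fun t : ℝ => Real.exp (-t ^ 2 / 2)) := by
    simpa [neg_div, div_eq_inv_mul] using integrable_exp_neg_mul_sq (by norm_num : (0 : ℝ) < 2⁻¹)
  have hbound : ‖∫ t in b..a, Real.exp (-t ^ 2 / 2)‖ ≤ 1 * |a - b| := by
    refine intervalIntegral.norm_integral_le_of_norm_le_const fun t _ => ?_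
    rw [Real.norm_of_nonneg (Real.exp_nonneg _), Real.exp_le_one_iff]
    nlinarith [sq_nonneg t]
  rw [stdNormalCDF, stdNormalCDF, ← mul_sub, intervalIntegral.integral_Iic_sub_Iic
    hint.integrableOn hint.integrableOn, abs_mul, abs_inv, abs_of_nonneg (Real.sqrt_nonneg _),
    inv_mul_eq_div]
  rw [Real.norm_eq_abs, one_mul] at hbound
  gcongr

lemma abs_stdNormalCDF_neg_div_sub_le (x y : ℝ) {σ : ℝ} (hσ : 0 < σ) :
    |stdNormalCDF (-x / σ) - stdNormalCDF (-y / σ)| ≤ |x - y| / (σ * Real.sqrt (2 * Real.pi)) := by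
  calc _ ≤ |-x / σ - -y / σ| / Real.sqrt (2 * Real.pi) := abs_stdNormalCDF_sub_le _ _
    _ = |x - y| / (σ * Real.sqrt (2 * Real.pi)) := by
      rw [← sub_div, abs_div, abs_of_pos hσ, div_div, neg_sub_neg, abs_sub_comm]

section CauchySchwarz

variable {Ω : Type*} [MeasurableSpace Ω] {μ : Measure Ω} {a b : Ω → ℝ}

lemma MeasureTheory.Integrable.memLp_two_sqrt (ha : Integrable a μ) (ha0 : 0 ≤ᵐ[μ] a) :
    MemLp (fun u => Real.sqrt (a u)) 2 μ := by
  rw [memLp_two_iff_integrable_sq (Real.continuous_sqrt.comp_aestronglyMeasurable ha.1)]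
  refine ha.congr ?_
  filter_upwards [ha0] with u hu
  exact (Real.sq_sqrt hu).symm

lemma MeasureTheory.Integrable.sqrt_mul (ha : Integrable a μ) (hb : Integrable b μ)
    (ha0 : 0 ≤ᵐ[μ] a) (hb0 : 0 ≤ᵐ[μ] b) :
    Integrable (fun u => Real.sqrt (a u * b u)) μ := by
  refine ((ha.memLp_two_sqrt ha0).integrable_mul (hb.memLp_two_sqrt hb0)).congr ?_
  filter_upwards [ha0] with u hu
  exact (Real.sqrt_mul hu _).symm

lemma integral_sqrt_mul_le (ha : Integrable a μ) (hb : Integrable b μ)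
    (ha0 : 0 ≤ᵐ[μ] a) (hb0 : 0 ≤ᵐ[μ] b) :
    ∫ u, Real.sqrt (a u * b u) ∂μ
      ≤ Real.sqrt (∫ u, a u ∂μ) * Real.sqrt (∫ u, b u ∂μ) := by
  have hsq : ∀ {f : Ω → ℝ}, 0 ≤ᵐ[μ] f →
      (∫ u, Real.sqrt (f u) ^ (2 : ℝ) ∂μ) ^ (1 / (2 : ℝ)) = Real.sqrt (∫ u, f u ∂μ) := by
    intro f hf
    rw [Real.sqrt_eq_rpow]
    congr 1
    refine integral_congr_ae ?_
    filter_upwards [hf] with u hu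
    rw [Real.rpow_two, Real.sq_sqrt hu]
  have hL2 : ∀ {f : Ω → ℝ}, Integrable f μ → 0 ≤ᵐ[μ] f →
      MemLp (fun u => Real.sqrt (f u)) (ENNReal.ofReal 2) μ := fun hf hf0 => by
    simpa using hf.memLp_two_sqrt hf0
  calc ∫ u, Real.sqrt (a u * b u) ∂μ = ∫ u, Real.sqrt (a u) * Real.sqrt (b u) ∂μ := by
        refine integral_congr_ae ?_
        filter_upwards [ha0] with u hu
        exact Real.sqrt_mul hu _
    _ ≤ _ := by
      have := integral_mul_le_Lp_mul_Lq_of_nonneg Real.HolderConjugate.two_two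
        (.of_forall fun u => Real.sqrt_nonneg (a u)) (.of_forall fun u => Real.sqrt_nonneg (b u))
        (hL2 ha ha0) (hL2 hb hb0)
      rwa [hsq ha0, hsq hb0] at this

end CauchySchwarz

/-- Where `q = 0` the ratio `p ^ 2 / q` is the junk value `0`, hence the need for `p = 0` there. -/
lemma abs_mul_eq_sqrt_sq_mul_mul_sq_div {d p q : ℝ} (hp : 0 ≤ p) (hq : 0 < p → 0 < q) :
    |d| * p = Real.sqrt (d ^ 2 * q * (p ^ 2 / q)) := by
  rcases hp.eq_or_lt with rfl | hp
  · simp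
  · have hq := hq hp
    rw [mul_assoc, mul_div_cancel₀ _ hq.ne', Real.sqrt_mul (sq_nonneg _), Real.sqrt_sq_eq_abs,
      Real.sqrt_sq hp.le]

theorem soft_indicator_weighted_L1_bound_general
    {Ω : Type*} [MeasurableSpace Ω] (μ : Measure Ω)
    (p q g gHat : Ω → ℝ)
    (hp0 : ∀ u, 0 ≤ p u) (hq0 : ∀ u, 0 ≤ q u)
    (hqpos : ∀ᵐ u ∂μ, 0 < p u → 0 < q u)
    (C : ℝ)
    (hLRint : Integrable (fun u => (p u) ^ 2 / q u) μ)
    (hLR : ∫ u, (p u) ^ 2 / q u ∂μ ≤ C)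
    (σ : ℝ) (hσ : 0 < σ)
    (hErrInt : Integrable (fun u => (g u - gHat u) ^ 2 * q u) μ) :
    ∫ u, |stdNormalCDF (-(g u) / σ) - stdNormalCDF (-(gHat u) / σ)| * p u ∂μ
      ≤ (Real.sqrt C / (σ * Real.sqrt (2 * Real.pi)))
          * Real.sqrt (∫ u, (g u - gHat u) ^ 2 * q u ∂μ) := by
  set κ := (σ * Real.sqrt (2 * Real.pi))⁻¹
  have hErr0 : 0 ≤ᵐ[μ] fun u => (g u - gHat u) ^ 2 * q u :=
    .of_forall fun u => mul_nonneg (sq_nonneg _) (hq0 u)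
  have hLR0 : 0 ≤ᵐ[μ] fun u => p u ^ 2 / q u := .of_forall fun u => div_nonneg (sq_nonneg _) (hq0 u)
  have hpointwise : ∀ᵐ u ∂μ, |stdNormalCDF (-(g u) / σ) - stdNormalCDF (-(gHat u) / σ)| * p u
      ≤ κ * Real.sqrt ((g u - gHat u) ^ 2 * q u * (p u ^ 2 / q u)) := by
    filter_upwards [hqpos] with u hu
    calc _ ≤ |g u - gHat u| / (σ * Real.sqrt (2 * Real.pi)) * p u :=
          mul_le_mul_of_nonneg_right (abs_stdNormalCDF_neg_div_sub_le _ _ hσ) (hp0 u)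
      _ = κ * Real.sqrt ((g u - gHat u) ^ 2 * q u * (p u ^ 2 / q u)) := by
          rw [← abs_mul_eq_sqrt_sq_mul_mul_sq_div (hp0 u) hu]
          ring
  calc _ ≤ ∫ u, κ * Real.sqrt ((g u - gHat u) ^ 2 * q u * (p u ^ 2 / q u)) ∂μ :=
        integral_mono_of_nonneg (.of_forall fun u => mul_nonneg (abs_nonneg _) (hp0 u))
          ((hErrInt.sqrt_mul hLRint hErr0 hLR0).const_mul κ) hpointwise
    _ = κ * ∫ u, Real.sqrt ((g u - gHat u) ^ 2 * q u * (p u ^ 2 / q u)) ∂μ :=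
        integral_const_mul κ _
    _ ≤ κ * (Real.sqrt (∫ u, (g u - gHat u) ^ 2 * q u ∂μ) * Real.sqrt C) := by
        gcongr
        exact (integral_sqrt_mul_le hErrInt hLRint hErr0 hLR0).trans (by gcongr)
    _ = _ := by ring

/-- Weighted `L¹` bound on the difference of the true and surrogate soft importance
functions: under the likelihood-ratio control `∫ p²/q dμ ≤ C`,
`∫ |Φ(-g/σ) - Φ(-gHat/σ)| p dμ ≤ (√C / (σ √(2π))) (∫ (g - gHat)² q dμ)^{1/2}`. -/
theorem soft_indicator_weighted_L1_bound
    {Ω : Type*} [MeasurableSpace Ω] (μ : Measure Ω) [SigmaFinite μ]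
    (p q g gHat : Ω → ℝ)
    (hp : Measurable p) (hq : Measurable q) (hg : Measurable g) (hgHat : Measurable gHat)
    (hp0 : ∀ u, 0 ≤ p u) (hq0 : ∀ u, 0 ≤ q u)
    (hqpos : ∀ᵐ u ∂μ, 0 < p u → 0 < q u)
    (C : ℝ) (hC : 0 < C)
    (hLRint : Integrable (fun u => (p u) ^ 2 / q u) μ)
    (hLR : ∫ u, (p u) ^ 2 / q u ∂μ ≤ C)
    (σ : ℝ) (hσ : 0 < σ)
    (hErrInt : Integrable (fun u => (g u - gHat u) ^ 2 * q u) μ) :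
    ∫ u, |stdNormalCDF (-(g u) / σ) - stdNormalCDF (-(gHat u) / σ)| * p u ∂μ
      ≤ (Real.sqrt C / (σ * Real.sqrt (2 * Real.pi)))
          * Real.sqrt (∫ u, (g u - gHat u) ^ 2 * q u ∂μ) :=
  soft_indicator_weighted_L1_bound_general μ p q g gHat hp0 hq0 hqpos C hLRint hLR σ hσ hErrInt
end

section
/- Let (Ω, 𝒜, μ) be a σ-finite measure space, let p : Ω → [0,∞) be measurable, and let h₁, h₂ : Ω → [0,∞) be measurable functions such that Z₁ := ∫ h₁ p dμ and Z₂ := ∫ h₂ p dμ satisfy 0 < Zᵢ < ∞ for i = 1,2, and such that ∫ |h₁ - h₂| p dμ < ∞. Then the L¹ distance between the normalized densities satisfies ∫ | h₁(u) p(u) / Z₁ - h₂(u) p(u) / Z₂ | dμ(u) ≤ (2 / Z₁) ∫ |h₁(u) - h₂(u)| p(u) dμ(u). -/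
open MeasureTheory Set

/-!
Write `h₁ p / Z₁ - h₂ p / Z₂ = (h₁ - h₂) p / Z₁ + h₂ p (Z₂ - Z₁) / (Z₁ Z₂)`. The first term
contributes `∫ |h₁ - h₂| p / Z₁`; the second, being of constant sign, integrates to
`|Z₂ - Z₁| / Z₁`, and `|Z₂ - Z₁| = |∫ (h₂ - h₁) p|` is again at most `∫ |h₁ - h₂| p`.
-/

theorem abs_div_sub_div_le {a b x y : ℝ} (ha : 0 < a) (hb : 0 < b) (hy : 0 ≤ y) :
    |x / a - y / b| ≤ |x - y| / a + y * |b - a| / (a * b) := by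
  have hsplit : x / a - y / b = (x - y) / a + y * (b - a) / (a * b) := by
    field_simp
    ring
  rw [hsplit]
  calc |(x - y) / a + y * (b - a) / (a * b)|
      ≤ |(x - y) / a| + |y * (b - a) / (a * b)| := abs_add_le _ _
    _ = |x - y| / a + y * |b - a| / (a * b) := by
        rw [abs_div, abs_div, abs_mul, abs_of_pos ha, abs_of_nonneg hy,
          abs_of_pos (mul_pos ha hb)]

section

variable {Ω : Type*} [MeasurableSpace Ω] {μ : Measure Ω} {f g : Ω → ℝ}

theorem abs_integral_sub_integral_le (hf : Integrable f μ) (hg : Integrable g μ) :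
    |∫ u, f u ∂μ - ∫ u, g u ∂μ| ≤ ∫ u, |f u - g u| ∂μ := by
  rw [← integral_sub hf hg]
  exact abs_integral_le_integral_abs

theorem integral_abs_div_integral_sub_div_integral_le (hf : Integrable f μ)
    (hg : Integrable g μ) (hg0 : 0 ≤ᵐ[μ] g) (hZf : 0 < ∫ u, f u ∂μ) (hZg : 0 < ∫ u, g u ∂μ) :
    ∫ u, |f u / (∫ v, f v ∂μ) - g u / (∫ v, g v ∂μ)| ∂μ
      ≤ (2 / (∫ v, f v ∂μ)) * ∫ u, |f u - g u| ∂μ := by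
  set a := ∫ v, f v ∂μ
  set b := ∫ v, g v ∂μ
  set D := ∫ u, |f u - g u| ∂μ
  have hdiff : Integrable (fun u => |f u - g u| / a) μ := (hf.sub hg).abs.div_const a
  have hcorr : Integrable (fun u => g u * |b - a| / (a * b)) μ :=
    (hg.mul_const _).div_const _
  calc ∫ u, |f u / a - g u / b| ∂μ
      ≤ ∫ u, (|f u - g u| / a + g u * |b - a| / (a * b)) ∂μ :=
        integral_mono_of_nonneg (ae_of_all _ fun u => abs_nonneg _) (hdiff.add hcorr)
          (hg0.mono fun u hu => abs_div_sub_div_le hZf hZg hu)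
    _ = D / a + |b - a| / a := by
        rw [integral_add hdiff hcorr, integral_div, integral_div, integral_mul_const]
        change D / a + b * |b - a| / (a * b) = D / a + |b - a| / a
        field_simp
    _ ≤ D / a + D / a := by
        gcongr
        rw [abs_sub_comm]
        exact abs_integral_sub_integral_le hf hg
    _ = (2 / a) * D := by ring

end

theorem normalized_density_L1_bound_general
    {Ω : Type*} [MeasurableSpace Ω] (μ : Measure Ω)
    (p h₁ h₂ : Ω → ℝ)
    (hp0 : ∀ u, 0 ≤ p u) (h20 : ∀ u, 0 ≤ h₂ u)
    (hint1 : Integrable (fun u => h₁ u * p u) μ)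
    (hint2 : Integrable (fun u => h₂ u * p u) μ)
    (hZ1 : 0 < ∫ u, h₁ u * p u ∂μ)
    (hZ2 : 0 < ∫ u, h₂ u * p u ∂μ) :
    ∫ u, |h₁ u * p u / (∫ v, h₁ v * p v ∂μ) - h₂ u * p u / (∫ v, h₂ v * p v ∂μ)| ∂μ
      ≤ (2 / (∫ v, h₁ v * p v ∂μ)) * ∫ u, |h₁ u - h₂ u| * p u ∂μ := by
  have hweighted : ∀ u, |h₁ u - h₂ u| * p u = |h₁ u * p u - h₂ u * p u| := fun u => by
    rw [← sub_mul, abs_mul, abs_of_nonneg (hp0 u)]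
  simp_rw [hweighted]
  exact integral_abs_div_integral_sub_div_integral_le hint1 hint2
    (ae_of_all _ fun u => mul_nonneg (h20 u) (hp0 u)) hZ1 hZ2

/-- Normalization inequality for unnormalized probability densities: given a base
weight `p ≥ 0` and two nonnegative importance functions `h₁, h₂` with normalizing
constants `Zᵢ = ∫ hᵢ p dμ ∈ (0, ∞)` and `∫ |h₁ - h₂| p dμ < ∞`, the normalized
densities satisfy `∫ |h₁ p / Z₁ - h₂ p / Z₂| dμ ≤ (2 / Z₁) ∫ |h₁ - h₂| p dμ`. -/
theorem normalized_density_L1_bound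
    {Ω : Type*} [MeasurableSpace Ω] (μ : Measure Ω) [SigmaFinite μ]
    (p h₁ h₂ : Ω → ℝ)
    (hp : Measurable p) (hm1 : Measurable h₁) (hm2 : Measurable h₂)
    (hp0 : ∀ u, 0 ≤ p u) (h10 : ∀ u, 0 ≤ h₁ u) (h20 : ∀ u, 0 ≤ h₂ u)
    (hint1 : Integrable (fun u => h₁ u * p u) μ)
    (hint2 : Integrable (fun u => h₂ u * p u) μ)
    (hZ1 : 0 < ∫ u, h₁ u * p u ∂μ)
    (hZ2 : 0 < ∫ u, h₂ u * p u ∂μ)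
    (hdiff : Integrable (fun u => |h₁ u - h₂ u| * p u) μ) :
    ∫ u, |h₁ u * p u / (∫ v, h₁ v * p v ∂μ) - h₂ u * p u / (∫ v, h₂ v * p v ∂μ)| ∂μ
      ≤ (2 / (∫ v, h₁ v * p v ∂μ)) * ∫ u, |h₁ u - h₂ u| * p u ∂μ :=
  normalized_density_L1_bound_general μ p h₁ h₂ hp0 h20 hint1 hint2 hZ1 hZ2
end

section
/- Let p be a probability density on ℝ^d (with respect to Lebesgue measure), let q be a probability density with q(u) > 0 wherever p(u) > 0, and suppose ∫ p(u)²/q(u) du ≤ C for some finite C > 0. Let g, ĝ : ℝ^d → ℝ be measurable, let σ > 0, and define the soft importance functions h⋆(u) = Φ(-g(u)/σ) and ĥ(u) = Φ(-ĝ(u)/σ) with normalizing constants Z⋆ = ∫ h⋆ p du and Ẑ = ∫ ĥ p du. Assume Z⋆ ≥ z for some z > 0 and Ẑ > 0. Then the intermediate target densities π⋆ = h⋆ p / Z⋆ and π̂ = ĥ p / Ẑ satisfy ∫ |π⋆(u) - π̂(u)| du ≤ (2 √C / (z σ √(2π))) · ( ∫ (g(u) - ĝ(u))² q(u) du )^{1/2}.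 -/
/-!
Write `h⋆ = Φ(-g/σ)` and `ĥ = Φ(-ĝ/σ)`. The normalising constants differ by at most
`‖h⋆ p - ĥ p‖₁`, so normalising costs at most a factor `2 / Z⋆ ≤ 2 / z`:
`‖h⋆ p / Z⋆ - ĥ p / Ẑ‖₁ ≤ 2 ‖h⋆ p - ĥ p‖₁ / Z⋆`. Since `Φ' ≤ 1/√(2π)`, we have
`|h⋆ - ĥ| ≤ |g - ĝ| / (σ √(2π))`, and Cauchy–Schwarz applied to
`|g - ĝ| p = (|g - ĝ| √q) (p / √q)` bounds `∫ |g - ĝ| p` by `(∫ (g - ĝ)² q)^{1/2} (∫ p² / q)^{1/2}`.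
-/

open MeasureTheory Set

lemma integrable_exp_neg_sq_div_two : Integrable fun t : ℝ => Real.exp (-t ^ 2 / 2) := by
  simpa [neg_div, div_eq_inv_mul] using integrable_exp_neg_mul_sq (b := 1 / 2) (by norm_num)

lemma integral_exp_neg_sq_div_two :
    ∫ t : ℝ, Real.exp (-t ^ 2 / 2) = Real.sqrt (2 * Real.pi) := by
  simpa [neg_div, div_eq_inv_mul, div_inv_eq_mul, mul_comm] using integral_gaussian (1 / 2)

lemma stdNormalCDF_nonneg (x : ℝ) : 0 ≤ stdNormalCDF x := by
  unfold stdNormalCDF; positivity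

lemma stdNormalCDF_le_one (x : ℝ) : stdNormalCDF x ≤ 1 := by
  have h : ∫ t in Iic x, Real.exp (-t ^ 2 / 2) ≤ Real.sqrt (2 * Real.pi) :=
    integral_exp_neg_sq_div_two ▸ setIntegral_le_integral integrable_exp_neg_sq_div_two
      (.of_forall fun t => (Real.exp_pos _).le)
  rw [stdNormalCDF, inv_mul_le_one₀ (by positivity)]
  exact h

lemma continuous_stdNormalCDF : Continuous stdNormalCDF :=
  (LipschitzWith.of_dist_le_mul (K := (Real.sqrt (2 * Real.pi))⁻¹.toNNReal)
    fun a b => by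
      rw [Real.coe_toNNReal _ (by positivity), Real.dist_eq, Real.dist_eq, ← div_eq_inv_mul]
      exact abs_stdNormalCDF_sub_le a b).continuous

section
variable {α : Type*} [MeasurableSpace α] {μ : Measure α}

lemma integral_mul_le_sqrt_integral_sq_mul_sqrt_integral_sq {f g : α → ℝ}
    (hf0 : 0 ≤ᵐ[μ] f) (hg0 : 0 ≤ᵐ[μ] g) (hf : MemLp f 2 μ) (hg : MemLp g 2 μ) :
    ∫ x, f x * g x ∂μ ≤ Real.sqrt (∫ x, f x ^ 2 ∂μ) * Real.sqrt (∫ x, g x ^ 2 ∂μ) := by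
  have h2 : ENNReal.ofReal 2 = 2 := ENNReal.ofReal_ofNat 2
  have := integral_mul_le_Lp_mul_Lq_of_nonneg Real.HolderConjugate.two_two hf0 hg0
    (h2 ▸ hf) (h2 ▸ hg)
  simpa only [Real.rpow_two, Real.sqrt_eq_rpow] using this

lemma memLp_two_sqrt {f : α → ℝ} (hf : Integrable f μ) (hf0 : ∀ x, 0 ≤ f x) :
    MemLp (fun x => Real.sqrt (f x)) 2 μ := by
  rw [memLp_two_iff_integrable_sq (Real.continuous_sqrt.comp_aestronglyMeasurable hf.1)]
  simpa only [Real.sq_sqrt (hf0 _)] using hf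

lemma integrable_abs_mul_and_integral_abs_mul_le {a p q : α → ℝ}
    (hp0 : ∀ x, 0 ≤ p x) (hq0 : ∀ x, 0 ≤ q x) (hpq : ∀ᵐ x ∂μ, 0 < p x → 0 < q x)
    (ha : Integrable (fun x => a x ^ 2 * q x) μ) (hp : Integrable (fun x => p x ^ 2 / q x) μ) :
    Integrable (fun x => |a x| * p x) μ ∧
      ∫ x, |a x| * p x ∂μ ≤
        Real.sqrt (∫ x, a x ^ 2 * q x ∂μ) * Real.sqrt (∫ x, p x ^ 2 / q x ∂μ) := by
  have haq0 : ∀ x, 0 ≤ a x ^ 2 * q x := fun x => by have := hq0 x; positivity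
  have hpq0 : ∀ x, 0 ≤ p x ^ 2 / q x := fun x => by have := hq0 x; positivity
  have hf := memLp_two_sqrt ha haq0
  have hg := memLp_two_sqrt hp hpq0
  have hsplit : (fun x => |a x| * p x) =ᵐ[μ]
      fun x => Real.sqrt (a x ^ 2 * q x) * Real.sqrt (p x ^ 2 / q x) := by
    filter_upwards [hpq] with x hx
    rcases (hq0 x).eq_or_lt with hq | hq
    · have : p x = 0 := by_contra fun h => (hx ((hp0 x).lt_of_ne' h)).ne' hq.symm
      simp [this, ← hq]
    · rw [← Real.sqrt_mul (haq0 x), show a x ^ 2 * q x * (p x ^ 2 / q x) = (|a x| * p x) ^ 2 by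
        field_simp; rw [sq_abs]; ring, Real.sqrt_sq (mul_nonneg (abs_nonneg _) (hp0 x))]
  refine ⟨(hf.integrable_mul hg).congr hsplit.symm, ?_⟩
  rw [integral_congr_ae hsplit]
  have := integral_mul_le_sqrt_integral_sq_mul_sqrt_integral_sq
    (.of_forall fun x => Real.sqrt_nonneg _) (.of_forall fun x => Real.sqrt_nonneg _) hf hg
  simpa only [Real.sq_sqrt (haq0 _), Real.sq_sqrt (hpq0 _)] using this

lemma mul_abs_inv_sub_inv_le {Z Z' : ℝ} (hZ : 0 < Z) (hZ' : 0 ≤ Z') :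
    Z' * |Z⁻¹ - Z'⁻¹| ≤ |Z - Z'| / Z := by
  rcases hZ'.eq_or_lt with rfl | hZ'
  · simp only [zero_mul]; positivity
  · refine le_of_eq ?_
    rw [inv_sub_inv hZ.ne' hZ'.ne', abs_div, abs_of_pos (mul_pos hZ hZ'), abs_sub_comm]
    field_simp

lemma integral_abs_div_integral_sub_div_integral_le_s3 {a b : α → ℝ}
    (ha : Integrable a μ) (hb : Integrable b μ) (hb0 : 0 ≤ᵐ[μ] b) (hZ : 0 < ∫ x, a x ∂μ) :
    ∫ x, |a x / ∫ y, a y ∂μ - b x / ∫ y, b y ∂μ| ∂μ ≤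
      2 * (∫ x, |a x - b x| ∂μ) / ∫ x, a x ∂μ := by
  set Z := ∫ x, a x ∂μ
  set Z' := ∫ x, b x ∂μ
  have hZ' : 0 ≤ Z' := integral_nonneg_of_ae hb0
  have hdiff : |Z - Z'| ≤ ∫ x, |a x - b x| ∂μ := by
    rw [← integral_sub ha hb]; exact abs_integral_le_integral_abs
  have hpt : ∀ᵐ x ∂μ, |a x / Z - b x / Z'| ≤ |a x - b x| / Z + b x * |Z⁻¹ - Z'⁻¹| := by
    filter_upwards [hb0] with x hx
    calc |a x / Z - b x / Z'| = |(a x - b x) / Z + b x * (Z⁻¹ - Z'⁻¹)| := by ring_nf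
      _ ≤ |a x - b x| / Z + b x * |Z⁻¹ - Z'⁻¹| := by
        refine (abs_add_le _ _).trans_eq ?_
        rw [abs_div, abs_of_pos hZ, abs_mul, abs_of_nonneg hx]
  have hI : Integrable (fun x => |a x - b x| / Z) μ := (ha.sub hb).abs.div_const Z
  calc ∫ x, |a x / Z - b x / Z'| ∂μ
      ≤ ∫ x, (|a x - b x| / Z + b x * |Z⁻¹ - Z'⁻¹|) ∂μ :=
        integral_mono_of_nonneg (.of_forall fun x => abs_nonneg _) (hI.add (hb.mul_const _)) hpt
    _ = (∫ x, |a x - b x| ∂μ) / Z + Z' * |Z⁻¹ - Z'⁻¹| := by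
        rw [integral_add hI (hb.mul_const _), integral_div, integral_mul_const]
    _ ≤ (∫ x, |a x - b x| ∂μ) / Z + (∫ x, |a x - b x| ∂μ) / Z := by
        gcongr
        exact (mul_abs_inv_sub_inv_le hZ hZ').trans (div_le_div_of_nonneg_right hdiff hZ.le)
    _ = 2 * (∫ x, |a x - b x| ∂μ) / Z := by ring

lemma integrable_stdNormalCDF_comp_mul {f p : α → ℝ} (hf : Measurable f) (hp : Integrable p μ) :
    Integrable (fun x => stdNormalCDF (f x) * p x) μ :=
  hp.bdd_mul (continuous_stdNormalCDF.measurable.comp hf).aestronglyMeasurable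
    (.of_forall fun x => by
      rw [Real.norm_of_nonneg (stdNormalCDF_nonneg _)]; exact stdNormalCDF_le_one _)

end

theorem intermediate_target_L1_stability_general
    (d : ℕ) (p q g gHat : (Fin d → ℝ) → ℝ)
    (hg : Measurable g) (hgHat : Measurable gHat)
    (hp0 : ∀ u, 0 ≤ p u) (hq0 : ∀ u, 0 ≤ q u)
    (hp1 : ∫ u, p u = 1)
    (hqpos : ∀ᵐ u, 0 < p u → 0 < q u)
    (C : ℝ)
    (hLRint : Integrable (fun u => (p u) ^ 2 / q u))
    (hLR : ∫ u, (p u) ^ 2 / q u ≤ C)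
    (σ z : ℝ) (hσ : 0 < σ) (hz : 0 < z)
    (hZstar : z ≤ ∫ u, stdNormalCDF (-(g u) / σ) * p u)
    (hErrInt : Integrable (fun u => (g u - gHat u) ^ 2 * q u)) :
    ∫ u, |stdNormalCDF (-(g u) / σ) * p u / (∫ v, stdNormalCDF (-(g v) / σ) * p v)
            - stdNormalCDF (-(gHat u) / σ) * p u / (∫ v, stdNormalCDF (-(gHat v) / σ) * p v)|
      ≤ (2 * Real.sqrt C / (z * σ * Real.sqrt (2 * Real.pi)))
          * Real.sqrt (∫ u, (g u - gHat u) ^ 2 * q u) := by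
  have hp : Integrable p := .of_integral_ne_zero (by rw [hp1]; exact one_ne_zero)
  obtain ⟨hErrP, hCS⟩ := integrable_abs_mul_and_integral_abs_mul_le (a := fun u => g u - gHat u)
    hp0 hq0 hqpos hErrInt hLRint
  have hlip (u) : |stdNormalCDF (-(g u) / σ) - stdNormalCDF (-(gHat u) / σ)| ≤
      |g u - gHat u| / (σ * Real.sqrt (2 * Real.pi)) := by
    refine (abs_stdNormalCDF_sub_le _ _).trans_eq ?_
    rw [← sub_div, neg_sub_neg, abs_div, abs_of_pos hσ, abs_sub_comm, div_div]
  have hD : ∫ u, |stdNormalCDF (-(g u) / σ) * p u - stdNormalCDF (-(gHat u) / σ) * p u| ≤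
      (∫ u, |g u - gHat u| * p u) / (σ * Real.sqrt (2 * Real.pi)) := by
    rw [← integral_div]
    refine integral_mono_of_nonneg (.of_forall fun u => abs_nonneg _) (hErrP.div_const _)
      (.of_forall fun u => ?_)
    beta_reduce
    rw [← sub_mul, abs_mul, abs_of_nonneg (hp0 u), mul_div_right_comm]
    exact mul_le_mul_of_nonneg_right (hlip u) (hp0 u)
  calc _ ≤ 2 * (∫ u, |stdNormalCDF (-(g u) / σ) * p u - stdNormalCDF (-(gHat u) / σ) * p u|) /
        ∫ u, stdNormalCDF (-(g u) / σ) * p u :=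
        integral_abs_div_integral_sub_div_integral_le_s3
          (integrable_stdNormalCDF_comp_mul (hg.neg.div_const σ) hp)
          (integrable_stdNormalCDF_comp_mul (hgHat.neg.div_const σ) hp)
          (.of_forall fun u => mul_nonneg (stdNormalCDF_nonneg _) (hp0 u)) (hz.trans_le hZstar)
    _ ≤ 2 * (Real.sqrt (∫ u, (g u - gHat u) ^ 2 * q u) * Real.sqrt C /
        (σ * Real.sqrt (2 * Real.pi))) / z := by
        gcongr
        exact hD.trans (div_le_div_of_nonneg_right (hCS.trans (by gcongr)) (by positivity))
    _ = _ := by field_simp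

/-- Stability of the smoothed ICE intermediate target densities: if `p` is the
nominal probability density on `ℝ^d`, `q` a proposal density with likelihood-ratio
control `∫ p²/q ≤ C`, and `π⋆ = Φ(-g/σ) p / Z⋆`, `π̂ = Φ(-ĝ/σ) p / Ẑ` are the
intermediate densities with `Z⋆ ≥ z > 0`, `Ẑ > 0`, then
`∫ |π⋆ - π̂| ≤ (2√C / (z σ √(2π))) (∫ (g - ĝ)² q)^{1/2}`. -/
theorem intermediate_target_L1_stability
    (d : ℕ) (p q g gHat : (Fin d → ℝ) → ℝ)
    (hp : Measurable p) (hq : Measurable q) (hg : Measurable g) (hgHat : Measurable gHat)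
    (hp0 : ∀ u, 0 ≤ p u) (hq0 : ∀ u, 0 ≤ q u)
    (hp1 : ∫ u, p u = 1) (hq1 : ∫ u, q u = 1)
    (hqpos : ∀ᵐ u, 0 < p u → 0 < q u)
    (C : ℝ) (hC : 0 < C)
    (hLRint : Integrable (fun u => (p u) ^ 2 / q u))
    (hLR : ∫ u, (p u) ^ 2 / q u ≤ C)
    (σ z : ℝ) (hσ : 0 < σ) (hz : 0 < z)
    (hZstar : z ≤ ∫ u, stdNormalCDF (-(g u) / σ) * p u)
    (hZhat : 0 < ∫ u, stdNormalCDF (-(gHat u) / σ) * p u)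
    (hErrInt : Integrable (fun u => (g u - gHat u) ^ 2 * q u)) :
    ∫ u, |stdNormalCDF (-(g u) / σ) * p u / (∫ v, stdNormalCDF (-(g v) / σ) * p v)
            - stdNormalCDF (-(gHat u) / σ) * p u / (∫ v, stdNormalCDF (-(gHat v) / σ) * p v)|
      ≤ (2 * Real.sqrt C / (z * σ * Real.sqrt (2 * Real.pi)))
          * Real.sqrt (∫ u, (g u - gHat u) ^ 2 * q u) :=
  intermediate_target_L1_stability_general d p q g gHat hg hgHat hp0 hq0 hp1 hqpos C hLRint hLR σ z
    hσ hz hZstar hErrInt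
end

section
/- Let p be a probability density on ℝ^d, let q be a probability density with q(u) > 0 wherever p(u) > 0 and ∫ p(u)²/q(u) du ≤ C for some finite C > 0, let g, ĝ : ℝ^d → ℝ be measurable, let σ > 0, and define h⋆(u) = Φ(-g(u)/σ), ĥ(u) = Φ(-ĝ(u)/σ), Z⋆ = ∫ h⋆ p du ≥ z > 0, Ẑ = ∫ ĥ p du > 0, and the intermediate target probability measures π⋆ and π̂ with Lebesgue densities h⋆ p / Z⋆ and ĥ p / Ẑ respectively. Let Π be a map from probability measures on ℝ^d to probability measures on ℝ^d satisfying the total-variation Lipschitz property TV(Π(μ), Π(ν)) ≤ L · TV(μ, ν) for some finite L ≥ 0 and all probability measures μ, ν. Then TV(Π(π⋆), Π(π̂)) ≤ (2 L √C / (z σ √(2π))) · ( ∫ (g(u) - ĝ(u))² q(u) du )^{1/2}. -/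
open MeasureTheory Set

/-- The total variation distance between two measures:
`TV(μ, ν) = sup { |μ(A) - ν(A)| : A measurable }`. -/
noncomputable def tvDist {E : Type*} [MeasurableSpace E] (μ ν : Measure E) : ℝ :=
  ⨆ s : {s : Set E // MeasurableSet s}, |(μ s.1).toReal - (ν s.1).toReal|

lemma dist_stdNormalCDF_le (a b : ℝ) :
    dist (stdNormalCDF a) (stdNormalCDF b) ≤ (Real.sqrt (2 * Real.pi))⁻¹ * dist a b := by
  have hint := integrable_exp_neg_sq_div_two.integrableOn (s := Iic a)
  have hint' := integrable_exp_neg_sq_div_two.integrableOn (s := Iic b)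
  rw [Real.dist_eq, Real.dist_eq, stdNormalCDF, stdNormalCDF, ← mul_sub, abs_mul,
    abs_of_nonneg (by positivity), intervalIntegral.integral_Iic_sub_Iic hint' hint]
  refine mul_le_mul_of_nonneg_left ?_ (by positivity)
  have hle : ∀ t : ℝ, ‖Real.exp (-t ^ 2 / 2)‖ ≤ 1 := fun t => by
    rw [Real.norm_of_nonneg (Real.exp_pos _).le, Real.exp_le_one_iff]
    linarith [sq_nonneg t]
  simpa only [one_mul, Real.norm_eq_abs] using
    intervalIntegral.norm_integral_le_of_norm_le_const fun t _ => hle t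

section

variable {α : Type*} [MeasurableSpace α] {μ : Measure α}

lemma integral_abs_stdNormalCDF_neg_div_mul_sub_le {g gHat w : α → ℝ} (hw : 0 ≤ w)
    {σ : ℝ} (hσ : 0 < σ) (hint : Integrable (fun a => |g a - gHat a| * w a) μ) :
    ∫ a, |stdNormalCDF (-g a / σ) * w a - stdNormalCDF (-gHat a / σ) * w a| ∂μ
      ≤ (σ * Real.sqrt (2 * Real.pi))⁻¹ * ∫ a, |g a - gHat a| * w a ∂μ := by
  rw [← integral_const_mul]
  refine integral_mono_of_nonneg (.of_forall fun a => abs_nonneg _) (hint.const_mul _)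
    (.of_forall fun a => ?_)
  have hΦ := dist_stdNormalCDF_le (-g a / σ) (-gHat a / σ)
  rw [Real.dist_eq, Real.dist_eq, show -g a / σ - -gHat a / σ = -((g a - gHat a) / σ) by ring,
    abs_neg, abs_div, abs_of_pos hσ] at hΦ
  calc |stdNormalCDF (-g a / σ) * w a - stdNormalCDF (-gHat a / σ) * w a|
      = |stdNormalCDF (-g a / σ) - stdNormalCDF (-gHat a / σ)| * w a := by
        rw [← sub_mul, abs_mul, abs_of_nonneg (hw a)]
    _ ≤ (Real.sqrt (2 * Real.pi))⁻¹ * (|g a - gHat a| / σ) * w a := by gcongr; exact hw a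
    _ = (σ * Real.sqrt (2 * Real.pi))⁻¹ * (|g a - gHat a| * w a) := by
        rw [mul_inv]; field_simp

lemma isProbabilityMeasure_withDensity_div_integral {f : α → ℝ} (hf0 : 0 ≤ f)
    (hf : ∫ a, f a ∂μ ≠ 0) :
    IsProbabilityMeasure (μ.withDensity fun a => ENNReal.ofReal (f a / ∫ b, f b ∂μ)) := by
  constructor
  rw [withDensity_apply _ .univ, Measure.restrict_univ,
    ← ofReal_integral_eq_lintegral_ofReal ((Integrable.of_integral_ne_zero hf).div_const _)
      (.of_forall fun a => div_nonneg (hf0 a) (integral_nonneg hf0)),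
    integral_div, div_self hf, ENNReal.ofReal_one]

lemma tvDist_withDensity_ofReal_le {f₁ f₂ : α → ℝ} (h₁ : Integrable f₁ μ) (h₂ : Integrable f₂ μ)
    (h₁0 : 0 ≤ f₁) (h₂0 : 0 ≤ f₂) :
    tvDist (μ.withDensity fun a => ENNReal.ofReal (f₁ a))
      (μ.withDensity fun a => ENNReal.ofReal (f₂ a)) ≤ ∫ a, |f₁ a - f₂ a| ∂μ := by
  refine ciSup_le fun ⟨s, hs⟩ => ?_
  have hmeasure : ∀ f : α → ℝ, Integrable f μ → 0 ≤ f →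
      ((μ.withDensity fun a => ENNReal.ofReal (f a)) s).toReal = ∫ a in s, f a ∂μ :=
    fun f hf hf0 => by
      rw [withDensity_apply _ hs, ← ofReal_integral_eq_lintegral_ofReal hf.integrableOn
        (.of_forall hf0), ENNReal.toReal_ofReal (integral_nonneg hf0)]
  rw [hmeasure f₁ h₁ h₁0, hmeasure f₂ h₂ h₂0, ← integral_sub h₁.integrableOn h₂.integrableOn]
  exact abs_integral_le_integral_abs.trans
    (setIntegral_le_integral (h₁.sub h₂).abs (.of_forall fun a => abs_nonneg _))

/-- The difference of the normalising constants is itself bounded by `∫ |f₁ - f₂|`. -/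
lemma integral_abs_div_integral_sub_div_integral_le_s4 {f₁ f₂ : α → ℝ} (h₂0 : 0 ≤ f₂)
    (hZ₁ : 0 < ∫ a, f₁ a ∂μ) (hZ₂ : 0 < ∫ a, f₂ a ∂μ) :
    ∫ a, |f₁ a / ∫ b, f₁ b ∂μ - f₂ a / ∫ b, f₂ b ∂μ| ∂μ
      ≤ 2 / (∫ a, f₁ a ∂μ) * ∫ a, |f₁ a - f₂ a| ∂μ := by
  set Z₁ := ∫ a, f₁ a ∂μ
  set Z₂ := ∫ a, f₂ a ∂μ
  have h₁ : Integrable f₁ μ := .of_integral_ne_zero hZ₁.ne'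
  have h₂ : Integrable f₂ μ := .of_integral_ne_zero hZ₂.ne'
  have hdiff : Integrable (fun a => |f₁ a - f₂ a|) μ := (h₁.sub h₂).abs
  have hpoint : ∀ a, |f₁ a / Z₁ - f₂ a / Z₂| ≤ |f₁ a - f₂ a| / Z₁ + f₂ a * |1 / Z₁ - 1 / Z₂| :=
    fun a => by
      calc |f₁ a / Z₁ - f₂ a / Z₂| ≤ |f₁ a / Z₁ - f₂ a / Z₁| + |f₂ a / Z₁ - f₂ a / Z₂| :=
            abs_sub_le _ _ _
        _ = |f₁ a - f₂ a| / Z₁ + f₂ a * |1 / Z₁ - 1 / Z₂| := by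
            rw [← sub_div, abs_div, abs_of_pos hZ₁, div_eq_mul_one_div (f₂ a),
              div_eq_mul_one_div (f₂ a) Z₂, ← mul_sub, abs_mul, abs_of_nonneg (h₂0 a)]
  have hZ : Z₂ * |1 / Z₁ - 1 / Z₂| ≤ (∫ a, |f₁ a - f₂ a| ∂μ) / Z₁ := by
    have hscale : Z₂ * (1 / Z₁ - 1 / Z₂) = (Z₂ - Z₁) / Z₁ := by field_simp
    rw [show Z₂ * |1 / Z₁ - 1 / Z₂| = |Z₂ * (1 / Z₁ - 1 / Z₂)| by rw [abs_mul, abs_of_pos hZ₂],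
      hscale, abs_div, abs_of_pos hZ₁, abs_sub_comm]
    gcongr
    rw [← integral_sub h₁ h₂]
    exact abs_integral_le_integral_abs
  calc ∫ a, |f₁ a / Z₁ - f₂ a / Z₂| ∂μ
      ≤ ∫ a, (|f₁ a - f₂ a| / Z₁ + f₂ a * |1 / Z₁ - 1 / Z₂|) ∂μ :=
        integral_mono_of_nonneg (.of_forall fun a => abs_nonneg _)
          ((hdiff.div_const _).add (h₂.mul_const _)) (.of_forall hpoint)
    _ = (∫ a, |f₁ a - f₂ a| ∂μ) / Z₁ + Z₂ * |1 / Z₁ - 1 / Z₂| := by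
        rw [integral_add (hdiff.div_const _) (h₂.mul_const _), integral_div,
          integral_mul_const]
    _ ≤ 2 / Z₁ * ∫ a, |f₁ a - f₂ a| ∂μ := by
        linarith [show 2 / Z₁ * ∫ a, |f₁ a - f₂ a| ∂μ
          = (∫ a, |f₁ a - f₂ a| ∂μ) / Z₁ + (∫ a, |f₁ a - f₂ a| ∂μ) / Z₁ by ring]

lemma tvDist_withDensity_div_integral_le {f₁ f₂ : α → ℝ} (h₁0 : 0 ≤ f₁) (h₂0 : 0 ≤ f₂)
    (hZ₁ : 0 < ∫ a, f₁ a ∂μ) (hZ₂ : 0 < ∫ a, f₂ a ∂μ) :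
    tvDist (μ.withDensity fun a => ENNReal.ofReal (f₁ a / ∫ b, f₁ b ∂μ))
      (μ.withDensity fun a => ENNReal.ofReal (f₂ a / ∫ b, f₂ b ∂μ))
      ≤ 2 / (∫ a, f₁ a ∂μ) * ∫ a, |f₁ a - f₂ a| ∂μ :=
  (tvDist_withDensity_ofReal_le ((Integrable.of_integral_ne_zero hZ₁.ne').div_const _)
    ((Integrable.of_integral_ne_zero hZ₂.ne').div_const _)
    (fun a => div_nonneg (h₁0 a) hZ₁.le) (fun a => div_nonneg (h₂0 a) hZ₂.le)).trans
    (integral_abs_div_integral_sub_div_integral_le_s4 h₂0 hZ₁ hZ₂)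

lemma integral_mul_le_sqrt_mul_sqrt_of_nonneg {f g : α → ℝ} (hf0 : 0 ≤ᵐ[μ] f) (hg0 : 0 ≤ᵐ[μ] g)
    (hf : MemLp f 2 μ) (hg : MemLp g 2 μ) :
    ∫ a, f a * g a ∂μ ≤ Real.sqrt (∫ a, f a ^ 2 ∂μ) * Real.sqrt (∫ a, g a ^ 2 ∂μ) := by
  have h := integral_mul_le_Lp_mul_Lq_of_nonneg Real.HolderConjugate.two_two hf0 hg0
    (by simpa using hf) (by simpa using hg)
  simpa only [Real.rpow_two, Real.sqrt_eq_rpow, one_div] using h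

variable {e p q : α → ℝ}

lemma abs_mul_ae_eq_mul_sqrt_mul_div_sqrt (hp0 : 0 ≤ p) (hpq : ∀ᵐ a ∂μ, 0 < p a → 0 < q a) :
    (fun a => |e a| * p a) =ᵐ[μ] fun a => |e a| * Real.sqrt (q a) * (p a / Real.sqrt (q a)) := by
  filter_upwards [hpq] with a ha
  rcases (hp0 a).eq_or_lt with hp | hp
  · simp [← hp]
  · have := Real.sqrt_pos.2 (ha hp)
    field_simp

lemma memLp_two_abs_mul_sqrt (he : AEMeasurable e μ) (hq : AEMeasurable q μ)
    (hq0 : 0 ≤ q) (h : Integrable (fun a => e a ^ 2 * q a) μ) :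
    MemLp (fun a => |e a| * Real.sqrt (q a)) 2 μ := by
  refine (memLp_two_iff_integrable_sq
    ((continuous_abs.measurable.comp_aemeasurable he).mul hq.sqrt).aestronglyMeasurable).2
    (h.congr (.of_forall fun a => ?_))
  simp only [Pi.mul_apply, Function.comp_apply, mul_pow, sq_abs, Real.sq_sqrt (hq0 a)]

lemma memLp_two_div_sqrt (hp : AEMeasurable p μ) (hq : AEMeasurable q μ)
    (hq0 : 0 ≤ q) (h : Integrable (fun a => p a ^ 2 / q a) μ) :
    MemLp (fun a => p a / Real.sqrt (q a)) 2 μ := by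
  refine (memLp_two_iff_integrable_sq (hp.div hq.sqrt).aestronglyMeasurable).2
    (h.congr (.of_forall fun a => ?_))
  simp only [Pi.div_apply, div_pow, Real.sq_sqrt (hq0 a)]

/-- Cauchy–Schwarz applied to `|e| p = (|e| √q) (p / √q)`, which holds almost everywhere thanks to
the support condition on `q`. -/
lemma integrable_abs_mul_and_integral_le_sqrt_mul_sqrt (he : AEMeasurable e μ)
    (hp : AEMeasurable p μ) (hq : AEMeasurable q μ) (hp0 : 0 ≤ p) (hq0 : 0 ≤ q)
    (hpq : ∀ᵐ a ∂μ, 0 < p a → 0 < q a) (heq2 : Integrable (fun a => e a ^ 2 * q a) μ)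
    (hpq2 : Integrable (fun a => p a ^ 2 / q a) μ) :
    Integrable (fun a => |e a| * p a) μ ∧
      ∫ a, |e a| * p a ∂μ
        ≤ Real.sqrt (∫ a, e a ^ 2 * q a ∂μ) * Real.sqrt (∫ a, p a ^ 2 / q a ∂μ) := by
  have hf := memLp_two_abs_mul_sqrt he hq hq0 heq2
  have hg := memLp_two_div_sqrt hp hq hq0 hpq2
  have heq := abs_mul_ae_eq_mul_sqrt_mul_div_sqrt (e := e) hp0 hpq
  refine ⟨(hf.integrable_mul hg).congr heq.symm, ?_⟩
  have hq0' : ∀ a, 0 ≤ q a := hq0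
  calc ∫ a, |e a| * p a ∂μ = ∫ a, |e a| * Real.sqrt (q a) * (p a / Real.sqrt (q a)) ∂μ :=
        integral_congr_ae heq
    _ ≤ Real.sqrt (∫ a, (|e a| * Real.sqrt (q a)) ^ 2 ∂μ)
          * Real.sqrt (∫ a, (p a / Real.sqrt (q a)) ^ 2 ∂μ) :=
        integral_mul_le_sqrt_mul_sqrt_of_nonneg
          (.of_forall fun a => mul_nonneg (abs_nonneg _) (Real.sqrt_nonneg _))
          (.of_forall fun a => div_nonneg (hp0 a) (Real.sqrt_nonneg _)) hf hg
    _ = Real.sqrt (∫ a, e a ^ 2 * q a ∂μ) * Real.sqrt (∫ a, p a ^ 2 / q a ∂μ) := by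
        simp only [mul_pow, sq_abs, div_pow, Real.sq_sqrt, hq0']

end

theorem one_step_proposal_stability_general
    (d : ℕ) (p q g gHat : (Fin d → ℝ) → ℝ)
    (hp : Measurable p) (hq : Measurable q) (hg : Measurable g) (hgHat : Measurable gHat)
    (hp0 : ∀ u, 0 ≤ p u) (hq0 : ∀ u, 0 ≤ q u)
    (hqpos : ∀ᵐ u, 0 < p u → 0 < q u)
    (C : ℝ)
    (hLRint : Integrable (fun u => (p u) ^ 2 / q u))
    (hLR : ∫ u, (p u) ^ 2 / q u ≤ C)
    (σ z : ℝ) (hσ : 0 < σ) (hz : 0 < z)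
    (hZstar : z ≤ ∫ u, stdNormalCDF (-(g u) / σ) * p u)
    (hZhat : 0 < ∫ u, stdNormalCDF (-(gHat u) / σ) * p u)
    (hErrInt : Integrable (fun u => (g u - gHat u) ^ 2 * q u))
    (Proj : Measure (Fin d → ℝ) → Measure (Fin d → ℝ))
    (L : ℝ) (hL0 : 0 ≤ L)
    (hProj : ∀ μ ν : Measure (Fin d → ℝ), IsProbabilityMeasure μ → IsProbabilityMeasure ν →
      tvDist (Proj μ) (Proj ν) ≤ L * tvDist μ ν) :
    tvDist
      (Proj (volume.withDensity fun u =>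
        ENNReal.ofReal (stdNormalCDF (-(g u) / σ) * p u
          / (∫ v, stdNormalCDF (-(g v) / σ) * p v))))
      (Proj (volume.withDensity fun u =>
        ENNReal.ofReal (stdNormalCDF (-(gHat u) / σ) * p u
          / (∫ v, stdNormalCDF (-(gHat v) / σ) * p v))))
      ≤ (2 * L * Real.sqrt C / (z * σ * Real.sqrt (2 * Real.pi)))
          * Real.sqrt (∫ u, (g u - gHat u) ^ 2 * q u) := by
  have hΦp0 : ∀ k : (Fin d → ℝ) → ℝ, 0 ≤ fun u => stdNormalCDF (-(k u) / σ) * p u :=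
    fun k u => mul_nonneg (stdNormalCDF_nonneg _) (hp0 u)
  have hZ : 0 < ∫ u, stdNormalCDF (-(g u) / σ) * p u := hz.trans_le hZstar
  obtain ⟨hint, hCS⟩ := integrable_abs_mul_and_integral_le_sqrt_mul_sqrt
    (e := fun u => g u - gHat u) (hg.sub hgHat).aemeasurable hp.aemeasurable hq.aemeasurable
    hp0 hq0 hqpos hErrInt hLRint
  have hI0 : 0 ≤ ∫ u, |g u - gHat u| * p u :=
    integral_nonneg fun u => mul_nonneg (abs_nonneg _) (hp0 u)
  calc _ ≤ L * tvDist _ _ := hProj _ _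
          (isProbabilityMeasure_withDensity_div_integral (hΦp0 g) hZ.ne')
          (isProbabilityMeasure_withDensity_div_integral (hΦp0 gHat) hZhat.ne')
    _ ≤ L * (2 / z * ((σ * Real.sqrt (2 * Real.pi))⁻¹ * ∫ u, |g u - gHat u| * p u)) := by
        grw [tvDist_withDensity_div_integral_le (hΦp0 g) (hΦp0 gHat) hZ hZhat,
          integral_abs_stdNormalCDF_neg_div_mul_sub_le hp0 hσ hint, ← hZstar]
    _ ≤ L * (2 / z * ((σ * Real.sqrt (2 * Real.pi))⁻¹
          * (Real.sqrt (∫ u, (g u - gHat u) ^ 2 * q u) * Real.sqrt C))) := by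
        grw [hCS, hLR]
    _ = _ := by field_simp

/-- One-step proposal stability of the surrogate-driven ICE update: if the
cross-entropy projection `Proj` is `L`-Lipschitz in total variation on probability
measures, then the projections of the true and surrogate intermediate targets
`π⋆ ∝ Φ(-g/σ) p` and `π̂ ∝ Φ(-ĝ/σ) p` satisfy
`TV(Proj π⋆, Proj π̂) ≤ (2 L √C / (z σ √(2π))) (∫ (g - ĝ)² q)^{1/2}`. -/
theorem one_step_proposal_stability
    (d : ℕ) (p q g gHat : (Fin d → ℝ) → ℝ)
    (hp : Measurable p) (hq : Measurable q) (hg : Measurable g) (hgHat : Measurable gHat)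
    (hp0 : ∀ u, 0 ≤ p u) (hq0 : ∀ u, 0 ≤ q u)
    (hp1 : ∫ u, p u = 1) (hq1 : ∫ u, q u = 1)
    (hqpos : ∀ᵐ u, 0 < p u → 0 < q u)
    (C : ℝ) (hC : 0 < C)
    (hLRint : Integrable (fun u => (p u) ^ 2 / q u))
    (hLR : ∫ u, (p u) ^ 2 / q u ≤ C)
    (σ z : ℝ) (hσ : 0 < σ) (hz : 0 < z)
    (hZstar : z ≤ ∫ u, stdNormalCDF (-(g u) / σ) * p u)
    (hZhat : 0 < ∫ u, stdNormalCDF (-(gHat u) / σ) * p u)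
    (hErrInt : Integrable (fun u => (g u - gHat u) ^ 2 * q u))
    (Proj : Measure (Fin d → ℝ) → Measure (Fin d → ℝ))
    (L : ℝ) (hL0 : 0 ≤ L)
    (hProj : ∀ μ ν : Measure (Fin d → ℝ), IsProbabilityMeasure μ → IsProbabilityMeasure ν →
      tvDist (Proj μ) (Proj ν) ≤ L * tvDist μ ν) :
    tvDist
      (Proj (volume.withDensity fun u =>
        ENNReal.ofReal (stdNormalCDF (-(g u) / σ) * p u
          / (∫ v, stdNormalCDF (-(g v) / σ) * p v))))
      (Proj (volume.withDensity fun u =>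
        ENNReal.ofReal (stdNormalCDF (-(gHat u) / σ) * p u
          / (∫ v, stdNormalCDF (-(gHat v) / σ) * p v))))
      ≤ (2 * L * Real.sqrt C / (z * σ * Real.sqrt (2 * Real.pi)))
          * Real.sqrt (∫ u, (g u - gHat u) ^ 2 * q u) :=
  one_step_proposal_stability_general d p q g gHat hp hq hg hgHat hp0 hq0 hqpos C hLRint hLR σ z hσ
    hz hZstar hZhat hErrInt Proj L hL0 hProj
end

section
/- Let ν be a probability measure on ℝ^d, let g, ĝ : ℝ^d → ℝ be measurable, and define the misclassification set M = { u : the conditions g(u) ≤ 0 and ĝ(u) ≤ 0 do not both hold or both fail } (i.e., 𝟙_{g(u)≤0} ≠ 𝟙_{ĝ(u)≤0}). Suppose the margin condition ν({u : |g(u)| ≤ τ}) ≤ C_m τ^κ holds for all 0 < τ ≤ τ₀, with constants C_m > 0, κ > 0, τ₀ > 0. Let ε = ( ∫ (g - ĝ)² dν )^{1/2}. Then for every τ with 0 < τ ≤ τ₀, ν(M) ≤ C_m τ^κ + ε² / τ². -/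
open MeasureTheory Set

/-! If the sign tests `g ≤ 0` and `ĝ ≤ 0` disagree at `u`, then `0` lies between `g u` and
`ĝ u`, so `|g u| ≤ |g u - ĝ u|`. Hence either `|g u| ≤ τ`, which the margin condition controls,
or `|g u - ĝ u| ≥ τ`, which Chebyshev's inequality for `g - ĝ` controls. -/

theorem abs_le_abs_sub_of_nonpos_ne {a b : ℝ} (h : (a ≤ 0) ≠ (b ≤ 0)) : |a| ≤ |a - b| := by
  rcases le_or_gt a 0 with ha | ha <;> rcases le_or_gt b 0 with hb | hb
  · exact absurd (by simp [ha, hb]) h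
  · rw [abs_of_nonpos ha, abs_of_nonpos (by linarith)]; linarith
  · rw [abs_of_pos ha, abs_of_nonneg (by linarith)]; linarith
  · exact absurd (by simp [not_le.mpr ha, not_le.mpr hb]) h

theorem setOf_nonpos_ne_subset_union {Ω : Type*} (g h : Ω → ℝ) {τ : ℝ} (hτ : 0 ≤ τ) :
    {u | (g u ≤ 0) ≠ (h u ≤ 0)} ⊆ {u | |g u| ≤ τ} ∪ {u | τ ^ 2 ≤ (g u - h u) ^ 2} := by
  intro u hu
  have hgap : |g u| ≤ |g u - h u| := abs_le_abs_sub_of_nonpos_ne hu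
  rcases le_or_gt |g u - h u| τ with hsmall | hlarge
  · exact Or.inl (hgap.trans hsmall)
  · right
    show τ ^ 2 ≤ (g u - h u) ^ 2
    rw [← sq_abs (g u - h u)]
    exact pow_le_pow_left₀ hτ hlarge.le 2

theorem measureReal_le_integral_div {Ω : Type*} [MeasurableSpace Ω] {μ : Measure Ω}
    {f : Ω → ℝ} (hf_nonneg : 0 ≤ᵐ[μ] f) (hf_int : Integrable f μ) {ε : ℝ} (hε : 0 < ε) :
    μ.real {u | ε ≤ f u} ≤ (∫ u, f u ∂μ) / ε := by
  rw [le_div_iff₀' hε]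
  exact mul_meas_ge_le_integral_of_nonneg hf_nonneg hf_int ε

theorem misclassification_split_bound_general
    (d : ℕ) (ν : Measure (Fin d → ℝ)) [IsProbabilityMeasure ν]
    (g gHat : (Fin d → ℝ) → ℝ)
    (Cm κ τ₀ : ℝ)
    (hmargin : ∀ τ : ℝ, 0 < τ → τ ≤ τ₀ → (ν {u | |g u| ≤ τ}).toReal ≤ Cm * τ ^ κ)
    (hInt : Integrable (fun u => (g u - gHat u) ^ 2) ν)
    (τ : ℝ) (hτ : 0 < τ) (hττ₀ : τ ≤ τ₀) :
    (ν {u | (g u ≤ 0) ≠ (gHat u ≤ 0)}).toReal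
      ≤ Cm * τ ^ κ
        + (Real.sqrt (∫ u, (g u - gHat u) ^ 2 ∂ν)) ^ 2 / τ ^ 2 := by
  have hchebyshev :
      ν.real {u | τ ^ 2 ≤ (g u - gHat u) ^ 2} ≤ (∫ u, (g u - gHat u) ^ 2 ∂ν) / τ ^ 2 :=
    measureReal_le_integral_div (Filter.Eventually.of_forall fun _ => sq_nonneg _) hInt
      (by positivity)
  rw [Real.sq_sqrt (integral_nonneg fun _ => sq_nonneg _)]
  calc ν.real {u | (g u ≤ 0) ≠ (gHat u ≤ 0)}
      ≤ ν.real ({u | |g u| ≤ τ} ∪ {u | τ ^ 2 ≤ (g u - gHat u) ^ 2}) :=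
        measureReal_mono (setOf_nonpos_ne_subset_union g gHat hτ.le)
    _ ≤ ν.real {u | |g u| ≤ τ} + ν.real {u | τ ^ 2 ≤ (g u - gHat u) ^ 2} :=
        measureReal_union_le _ _
    _ ≤ Cm * τ ^ κ + (∫ u, (g u - gHat u) ^ 2 ∂ν) / τ ^ 2 :=
        add_le_add (hmargin τ hτ hττ₀) hchebyshev

/-- Split bound for the surrogate-induced misclassification set: under the margin
condition `ν(|g| ≤ τ) ≤ C_m τ^κ` for `0 < τ ≤ τ₀`, the set `M` where the failure
indicators `𝟙_{g≤0}` and `𝟙_{ĝ≤0}` disagree satisfies, with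
`ε = (∫ (g - ĝ)² dν)^{1/2}`, the bound `ν(M) ≤ C_m τ^κ + ε²/τ²` for all
`0 < τ ≤ τ₀`. -/
theorem misclassification_split_bound
    (d : ℕ) (ν : Measure (Fin d → ℝ)) [IsProbabilityMeasure ν]
    (g gHat : (Fin d → ℝ) → ℝ)
    (hg : Measurable g) (hgHat : Measurable gHat)
    (Cm κ τ₀ : ℝ) (hCm : 0 < Cm) (hκ : 0 < κ) (hτ₀ : 0 < τ₀)
    (hmargin : ∀ τ : ℝ, 0 < τ → τ ≤ τ₀ → (ν {u | |g u| ≤ τ}).toReal ≤ Cm * τ ^ κ)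
    (hInt : Integrable (fun u => (g u - gHat u) ^ 2) ν)
    (τ : ℝ) (hτ : 0 < τ) (hττ₀ : τ ≤ τ₀) :
    (ν {u | (g u ≤ 0) ≠ (gHat u ≤ 0)}).toReal
      ≤ Cm * τ ^ κ
        + (Real.sqrt (∫ u, (g u - gHat u) ^ 2 ∂ν)) ^ 2 / τ ^ 2 :=
  misclassification_split_bound_general d ν g gHat Cm κ τ₀ hmargin hInt τ hτ hττ₀
end

section
/- Let p and q be probability densities on ℝ^d with p(u) ≤ C_∞ q(u) for Lebesgue-a.e. u (C_∞ > 0 finite), let ν be the probability measure with density q, let g, ĝ : ℝ^d → ℝ be measurable, and suppose the margin condition ν({u : |g(u)| ≤ τ}) ≤ C_m τ^κ holds for all 0 < τ ≤ τ₀ (C_m > 0, κ > 0, τ₀ > 0). Let ε = ( ∫ (g - ĝ)² dν )^{1/2} and assume 0 < ε^{2/(κ+2)} ≤ τ₀. Then the true failure probability P_F = ∫ 𝟙_{g≤0} p du and the surrogate-induced failure probability P̂ = ∫ 𝟙_{ĝ≤0} p du satisfy |P̂ - P_F| ≤ C_∞ (C_m + 1) · ε^{2κ/(κ+2)}. -/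
open MeasureTheory Set
open scoped symmDiff

/-!
The two failure events differ only on the disagreement set `{ĝ ≤ 0} ∆ {g ≤ 0}`, whose `p`-mass is
at most `C_∞` times its `ν`-measure. A point of disagreement has either `|g| ≤ τ`, controlled by
the margin condition, or `|g - ĝ| ≥ τ`, controlled by Chebyshev's inequality through `ε² / τ²`;
the choice `τ = ε ^ (2 / (κ + 2))` balances both bounds at `ε ^ (2κ / (κ + 2))`.
-/

theorem symmDiff_setOf_nonpos_subset {α : Type*} (g ĝ : α → ℝ) (τ : ℝ) :
    {x | ĝ x ≤ 0} ∆ {x | g x ≤ 0} ⊆ {x | |g x| ≤ τ} ∪ {x | τ ≤ |g x - ĝ x|} := by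
  intro x hx
  simp only [mem_symmDiff, mem_ofPred_eq, not_le, mem_union] at hx ⊢
  rw [abs_le, le_abs]
  by_contra!
  rcases hx with ⟨h1, h2⟩ | ⟨h1, h2⟩ <;> grind

section

variable {α : Type*} [MeasurableSpace α] {μ : Measure α}

theorem norm_setIntegral_sub_setIntegral_le_setIntegral_symmDiff
    {E : Type*} [NormedAddCommGroup E] [NormedSpace ℝ E] {f : α → E} (hf : Integrable f μ)
    {A B : Set α} (hA : MeasurableSet A) (hB : MeasurableSet B) :
    ‖(∫ x in A, f x ∂μ) - ∫ x in B, f x ∂μ‖ ≤ ∫ x in A ∆ B, ‖f x‖ ∂μ := by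
  have hsplit : (∫ x in A, f x ∂μ) - ∫ x in B, f x ∂μ
      = (∫ x in A \ B, f x ∂μ) - ∫ x in B \ A, f x ∂μ := by
    rw [← integral_inter_add_sdiff hB (hf.integrableOn (s := A)),
      ← integral_inter_add_sdiff hA (hf.integrableOn (s := B)), inter_comm B A]
    abel
  calc ‖(∫ x in A, f x ∂μ) - ∫ x in B, f x ∂μ‖
      ≤ ‖∫ x in A \ B, f x ∂μ‖ + ‖∫ x in B \ A, f x ∂μ‖ := hsplit ▸ norm_sub_le _ _
    _ ≤ (∫ x in A \ B, ‖f x‖ ∂μ) + ∫ x in B \ A, ‖f x‖ ∂μ :=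
      add_le_add (norm_integral_le_integral_norm _) (norm_integral_le_integral_norm _)
    _ = ∫ x in A ∆ B, ‖f x‖ ∂μ :=
      (setIntegral_union disjoint_sdiff_sdiff (hB.diff hA) hf.norm.integrableOn
        hf.norm.integrableOn).symm

theorem setIntegral_le_measureReal_withDensity_ofReal [SFinite μ] (q : α → ℝ) (s : Set α) :
    ∫ x in s, q x ∂μ ≤ (μ.withDensity fun x => ENNReal.ofReal (q x)).real s := by
  by_cases hq : IntegrableOn q s μ
  · rw [integral_eq_lintegral_pos_part_sub_lintegral_neg_part hq, measureReal_def,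
      withDensity_apply']
    exact sub_le_self _ ENNReal.toReal_nonneg
  · rw [integral_undef hq]
    exact measureReal_nonneg

theorem setIntegral_norm_le_mul_measureReal_withDensity [SFinite μ] {E : Type*}
    [NormedAddCommGroup E] {f : α → E} {q : α → ℝ} (hq : Integrable q μ) {C : ℝ} (hC : 0 ≤ C)
    (hfq : ∀ᵐ x ∂μ, ‖f x‖ ≤ C * q x) (s : Set α) :
    ∫ x in s, ‖f x‖ ∂μ ≤ C * (μ.withDensity fun x => ENNReal.ofReal (q x)).real s :=
  calc ∫ x in s, ‖f x‖ ∂μ ≤ ∫ x in s, C * q x ∂μ :=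
        integral_mono_of_nonneg (.of_forall fun _ => norm_nonneg _)
          (hq.const_mul C).integrableOn (ae_restrict_of_ae hfq)
    _ = C * ∫ x in s, q x ∂μ := integral_const_mul C _
    _ ≤ _ := mul_le_mul_of_nonneg_left (setIntegral_le_measureReal_withDensity_ofReal q s) hC

theorem measureReal_abs_ge_le_integral_sq_div_sq {f : α → ℝ} (hf : Integrable (fun x => f x ^ 2) μ)
    {τ : ℝ} (hτ : 0 < τ) : μ.real {x | τ ≤ |f x|} ≤ (∫ x, f x ^ 2 ∂μ) / τ ^ 2 := by
  have hset : {x | τ ≤ |f x|} = {x | τ ^ 2 ≤ f x ^ 2} := by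
    ext x
    simp only [mem_ofPred_eq, ← sq_abs (f x), pow_le_pow_iff_left₀ hτ.le (abs_nonneg _) two_ne_zero]
  rw [hset, le_div_iff₀ (by positivity), mul_comm]
  exact mul_meas_ge_le_integral_of_nonneg (.of_forall fun x => sq_nonneg (f x)) hf _

theorem measureReal_symmDiff_setOf_nonpos_le [IsFiniteMeasure μ] {g ĝ : α → ℝ}
    (hInt : Integrable (fun x => (g x - ĝ x) ^ 2) μ) {ε κ Cm : ℝ} (hε : 0 < ε) (hκ : κ + 2 ≠ 0)
    (hL2 : ∫ x, (g x - ĝ x) ^ 2 ∂μ ≤ ε ^ 2)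
    (hmargin : μ.real {x | |g x| ≤ ε ^ (2 / (κ + 2))} ≤ Cm * (ε ^ (2 / (κ + 2))) ^ κ) :
    μ.real ({x | ĝ x ≤ 0} ∆ {x | g x ≤ 0}) ≤ (Cm + 1) * ε ^ (2 * κ / (κ + 2)) := by
  set τ := ε ^ (2 / (κ + 2))
  have hτ : 0 < τ := by positivity
  have hτκ : τ ^ κ = ε ^ (2 * κ / (κ + 2)) := by
    rw [← Real.rpow_mul hε.le]
    ring_nf
  have hsq : ε ^ 2 / τ ^ 2 = ε ^ (2 * κ / (κ + 2)) := by
    rw [← Real.rpow_natCast τ, ← Real.rpow_mul hε.le, ← Real.rpow_natCast ε, ← Real.rpow_sub hε]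
    congr 1
    field_simp
    push_cast
    ring
  calc μ.real ({x | ĝ x ≤ 0} ∆ {x | g x ≤ 0})
      ≤ μ.real ({x | |g x| ≤ τ} ∪ {x | τ ≤ |g x - ĝ x|}) :=
        measureReal_mono (symmDiff_setOf_nonpos_subset g ĝ τ)
    _ ≤ μ.real {x | |g x| ≤ τ} + μ.real {x | τ ≤ |g x - ĝ x|} := measureReal_union_le _ _
    _ ≤ Cm * τ ^ κ + ε ^ 2 / τ ^ 2 := by
        gcongr
        exact (measureReal_abs_ge_le_integral_sq_div_sq hInt hτ).trans (by gcongr)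
    _ = (Cm + 1) * ε ^ (2 * κ / (κ + 2)) := by rw [hτκ, hsq]; ring

end

theorem surrogate_failure_probability_bias_margin_general
    (d : ℕ) (p q g gHat : (Fin d → ℝ) → ℝ)
    (hg : Measurable g) (hgHat : Measurable gHat)
    (hp0 : ∀ u, 0 ≤ p u)
    (hp1 : ∫ u, p u = 1) (hq1 : ∫ u, q u = 1)
    (Cinf : ℝ) (hCinf : 0 < Cinf)
    (hbound : ∀ᵐ u, p u ≤ Cinf * q u)
    (Cm κ τ₀ : ℝ) (hκ : 0 < κ)
    (hmargin : ∀ τ : ℝ, 0 < τ → τ ≤ τ₀ →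
      ((volume.withDensity fun u => ENNReal.ofReal (q u)) {u | |g u| ≤ τ}).toReal
        ≤ Cm * τ ^ κ)
    (hInt : Integrable (fun u => (g u - gHat u) ^ 2)
      (volume.withDensity fun u => ENNReal.ofReal (q u)))
    (hεpos : 0 < (Real.sqrt (∫ u, (g u - gHat u) ^ 2
        ∂(volume.withDensity fun u => ENNReal.ofReal (q u)))) ^ (2 / (κ + 2)))
    (hετ₀ : (Real.sqrt (∫ u, (g u - gHat u) ^ 2
        ∂(volume.withDensity fun u => ENNReal.ofReal (q u)))) ^ (2 / (κ + 2)) ≤ τ₀) :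
    |(∫ u in {u | gHat u ≤ 0}, p u) - ∫ u in {u | g u ≤ 0}, p u|
      ≤ Cinf * (Cm + 1)
          * (Real.sqrt (∫ u, (g u - gHat u) ^ 2
              ∂(volume.withDensity fun u => ENNReal.ofReal (q u)))) ^ (2 * κ / (κ + 2)) := by
  set ν := volume.withDensity fun u => ENNReal.ofReal (q u)
  set ε := Real.sqrt (∫ u, (g u - gHat u) ^ 2 ∂ν)
  have hqInt : Integrable q := .of_integral_ne_zero (by simp [hq1])
  have hpInt : Integrable p := .of_integral_ne_zero (by simp [hp1])
  have : IsFiniteMeasure ν := isFiniteMeasure_withDensity_ofReal hqInt.2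
  have hε : 0 < ε := (Real.sqrt_nonneg _).lt_of_ne' fun h => by
    change ε = 0 at h
    rw [h, Real.zero_rpow (by positivity)] at hεpos
    exact hεpos.false
  have hpq : ∀ᵐ u, ‖p u‖ ≤ Cinf * q u := by
    filter_upwards [hbound] with u hu
    rwa [Real.norm_of_nonneg (hp0 u)]
  calc |(∫ u in {u | gHat u ≤ 0}, p u) - ∫ u in {u | g u ≤ 0}, p u|
      ≤ ∫ u in {u | gHat u ≤ 0} ∆ {u | g u ≤ 0}, ‖p u‖ :=
        norm_setIntegral_sub_setIntegral_le_setIntegral_symmDiff hpInt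
          (measurableSet_le hgHat measurable_const) (measurableSet_le hg measurable_const)
    _ ≤ Cinf * ν.real ({u | gHat u ≤ 0} ∆ {u | g u ≤ 0}) :=
        setIntegral_norm_le_mul_measureReal_withDensity hqInt hCinf.le hpq _
    _ ≤ Cinf * ((Cm + 1) * ε ^ (2 * κ / (κ + 2))) := by
        gcongr
        exact measureReal_symmDiff_setOf_nonpos_le hInt hε (by positivity)
          (Real.sq_sqrt (integral_nonneg fun u => sq_nonneg _)).ge (hmargin _ hεpos hετ₀)
    _ = Cinf * (Cm + 1) * ε ^ (2 * κ / (κ + 2)) := by ring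

/-- Surrogate-induced bias bound: if `p ≤ C_∞ q` a.e. and the proposal measure
`ν` (with density `q`) satisfies the margin condition `ν(|g| ≤ τ) ≤ C_m τ^κ` for
`0 < τ ≤ τ₀`, and the local surrogate error `ε = (∫ (g - ĝ)² dν)^{1/2}` satisfies
`0 < ε^{2/(κ+2)} ≤ τ₀`, then the true and surrogate-induced failure probabilities
satisfy `|P̂ - P_F| ≤ C_∞ (C_m + 1) ε^{2κ/(κ+2)}`. -/
theorem surrogate_failure_probability_bias_margin
    (d : ℕ) (p q g gHat : (Fin d → ℝ) → ℝ)
    (hp : Measurable p) (hq : Measurable q) (hg : Measurable g) (hgHat : Measurable gHat)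
    (hp0 : ∀ u, 0 ≤ p u) (hq0 : ∀ u, 0 ≤ q u)
    (hp1 : ∫ u, p u = 1) (hq1 : ∫ u, q u = 1)
    (Cinf : ℝ) (hCinf : 0 < Cinf)
    (hbound : ∀ᵐ u, p u ≤ Cinf * q u)
    (Cm κ τ₀ : ℝ) (hCm : 0 < Cm) (hκ : 0 < κ) (hτ₀ : 0 < τ₀)
    (hmargin : ∀ τ : ℝ, 0 < τ → τ ≤ τ₀ →
      ((volume.withDensity fun u => ENNReal.ofReal (q u)) {u | |g u| ≤ τ}).toReal
        ≤ Cm * τ ^ κ)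
    (hInt : Integrable (fun u => (g u - gHat u) ^ 2)
      (volume.withDensity fun u => ENNReal.ofReal (q u)))
    (hεpos : 0 < (Real.sqrt (∫ u, (g u - gHat u) ^ 2
        ∂(volume.withDensity fun u => ENNReal.ofReal (q u)))) ^ (2 / (κ + 2)))
    (hετ₀ : (Real.sqrt (∫ u, (g u - gHat u) ^ 2
        ∂(volume.withDensity fun u => ENNReal.ofReal (q u)))) ^ (2 / (κ + 2)) ≤ τ₀) :
    |(∫ u in {u | gHat u ≤ 0}, p u) - ∫ u in {u | g u ≤ 0}, p u|
      ≤ Cinf * (Cm + 1)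
          * (Real.sqrt (∫ u, (g u - gHat u) ^ 2
              ∂(volume.withDensity fun u => ENNReal.ofReal (q u)))) ^ (2 * κ / (κ + 2)) :=
  surrogate_failure_probability_bias_margin_general d p q g gHat hg hgHat hp0 hp1 hq1 Cinf hCinf
    hbound Cm κ τ₀ hκ hmargin hInt hεpos hετ₀
end
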